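/- arXiv:2305.12143 — 3 statements merged into one kernel-verified Lean document; each statement's English description precedes it below -/
import Mathlib

section
/- A set of models M over a finite variable set V is closed under pairwise intersection if and only if M is exactly the set of models of some Horn formula (a finite conjunction of Horn clauses). -/
/-!
Horn formulas define intersection-closed families because each clause is preserved by
intersections. Conversely, let `M` be closed under intersections and `x ∉ M`. If no member of
`M` contains `x`, the clause `x → ⊥` holds in `M` and fails at `x`. Otherwise the least member
`z` of `M` above `x` (a finite intersection) strictly contains `x`; for `q ∈ z \ x` the clause
`x → q` holds in `M` and fails at `x`. Over a finite `V` there are finitely many such `x`, and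
their clauses form the formula.
-/

/-- A Horn clause: an antecedent (set of variables) and a consequent
which is either a variable (`some q`) or falsum `⊥` (`none`). -/
structure HornClause (V : Type*) where
  ant : Set V
  con : Option V

/-- A model `x ⊆ V` satisfies a Horn clause. -/
def HornClause.sat {V : Type*} (x : Set V) (h : HornClause V) : Prop :=
  ¬ h.ant ⊆ x ∨ ∃ q, h.con = some q ∧ q ∈ x

/-- Closure of a family of models under intersections of nonempty subfamilies. -/
def interClosure {V : Type*} (M : Set (Set V)) : Set (Set V) :=
  {x | ∃ N ⊆ M, N.Nonempty ∧ x = ⋂₀ N}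

open Set

namespace HornClause

variable {V : Type*}

def models (T : List (HornClause V)) : Set (Set V) :=
  {x | ∀ c ∈ T, c.sat x}

@[simp]
lemma sat_mk_none {P x : Set V} : (⟨P, none⟩ : HornClause V).sat x ↔ ¬ P ⊆ x := by
  simp [sat]

@[simp]
lemma sat_mk_some {P x : Set V} {q : V} :
    (⟨P, some q⟩ : HornClause V).sat x ↔ (P ⊆ x → q ∈ x) := by
  simp [sat, imp_iff_not_or]

lemma sat_inter {c : HornClause V} {x y : Set V} (hx : c.sat x) (hy : c.sat y) :
    c.sat (x ∩ y) := by
  obtain ⟨P, _ | q⟩ := c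
  · simp only [sat_mk_none] at *
    exact fun hP => hx (hP.trans inter_subset_left)
  · simp only [sat_mk_some, subset_inter_iff] at *
    exact fun hP => ⟨hx hP.1, hy hP.2⟩

lemma infClosed_models (T : List (HornClause V)) : InfClosed (models T) :=
  fun _ hx _ hy c hc => sat_inter (hx c hc) (hy c hc)

lemma exists_separating_of_notMem_of_infClosed {M : Set (Set V)} (hM : InfClosed M)
    (hfin : M.Finite) {x : Set V} (hx : x ∉ M) :
    ∃ c : HornClause V, ¬ c.sat x ∧ ∀ y ∈ M, c.sat y := by
  set U := {y ∈ M | x ⊆ y}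
  rcases U.eq_empty_or_nonempty with hU | hU
  · exact ⟨⟨x, none⟩, by simp, fun y hy =>
      sat_mk_none.2 fun hxy => notMem_empty y (hU.subset ⟨hy, hxy⟩)⟩
  have hUM : U ⊆ M := sep_subset _ _
  have hzM : ⋂₀ U ∈ M := hM.sInf_mem_of_nonempty (hfin.subset hUM) hU hUM
  have hxz : x ⊆ ⋂₀ U := subset_sInter fun y hy => hy.2
  obtain ⟨q, hqz, hqx⟩ := not_subset.1 fun hzx => hx (hxz.antisymm hzx ▸ hzM)
  exact ⟨⟨x, some q⟩, by simp [hqx], fun y hy =>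
      sat_mk_some.2 fun hxy => sInter_subset_of_mem (show y ∈ U from ⟨hy, hxy⟩) hqz⟩

lemma exists_models_eq_of_infClosed [Finite V] {M : Set (Set V)} (hM : InfClosed M) :
    ∃ T : List (HornClause V), models T = M := by
  have : Nonempty (HornClause V) := ⟨⟨∅, none⟩⟩
  choose! c hc_fails hc_holds using
    fun x (hx : x ∈ Mᶜ) => exists_separating_of_notMem_of_infClosed hM M.toFinite hx
  refine ⟨(toFinite Mᶜ).toFinset.toList.map c, subset_antisymm ?_ ?_⟩
  · intro x hx
    by_contra hxM
    exact hc_fails x hxM (hx _ (List.mem_map_of_mem (by simpa using hxM)))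
  · intro x hx d hd
    obtain ⟨y, hy, rfl⟩ := List.mem_map.1 hd
    exact hc_holds y (by simpa using hy) x hx

end HornClause

theorem stmt2 {V : Type*} [Fintype V] (M : Set (Set V)) :
    (∀ x ∈ M, ∀ y ∈ M, x ∩ y ∈ M) ↔
      ∃ T : List (HornClause V), M = {x | ∀ h ∈ T, HornClause.sat x h} := by
  constructor
  · intro hM
    obtain ⟨T, hT⟩ := HornClause.exists_models_eq_of_infClosed fun x hx y hy => hM x hx y hy
    exact ⟨T, hT.symm⟩
  · rintro ⟨T, rfl⟩ x hx y hy
    exact HornClause.infClosed_models T hx hy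
end

section
/- Let E⁺ be a finite set of models (positive examples) and x a model with E⁺ₓ := {e ∈ E⁺ | x ⊊ e} nonempty. Define the metaclause horn(x) := ⋀x → ⋀(⋂E⁺ₓ \ x). Then x falsifies horn(x), and every e ∈ E⁺ satisfies horn(x). -/
open Set

section Metaclause

variable {V : Type*}

/-- The model `y` satisfies the metaclause `⋀P → ⋀Q`. -/
def MetaclauseSat (y P Q : Set V) : Prop :=
  ¬ P ⊆ y ∨ Q ⊆ y

theorem not_metaclauseSat_self_diff {x S : Set V} (h : (S \ x).Nonempty) :
    ¬ MetaclauseSat x x (S \ x) := by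
  obtain ⟨q, hqS, hqx⟩ := h
  rintro (hxx | hsub)
  · exact hxx subset_rfl
  · exact hqx (hsub ⟨hqS, hqx⟩)

theorem metaclauseSat_sInter_ssupersets {E : Set (Set V)} {x e : Set V} (hxE : x ∉ E)
    (he : e ∈ E) : MetaclauseSat e x (⋂₀ {e' ∈ E | x ⊂ e'} \ x) := by
  by_cases hxe : x ⊆ e
  · have hx_ssubset_e : x ⊂ e := hxe.ssubset_of_ne fun h => hxE (h ▸ he)
    exact Or.inr (sdiff_subset.trans (sInter_subset_of_mem ⟨he, hx_ssubset_e⟩))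
  · exact Or.inl hxe

end Metaclause

theorem stmt8_general {V : Type*} (E : Set (Set V))
    (x : Set V) (hxE : x ∉ E)
    (hcon : (⋂₀ {e ∈ E | x ⊂ e} \ x).Nonempty) :
    ¬ (¬ x ⊆ x ∨ ⋂₀ {e ∈ E | x ⊂ e} \ x ⊆ x) ∧
      ∀ e ∈ E, (¬ x ⊆ e ∨ ⋂₀ {e' ∈ E | x ⊂ e'} \ x ⊆ e) :=
  ⟨not_metaclauseSat_self_diff hcon, fun _ he => metaclauseSat_sInter_ssupersets hxE he⟩

/-- horn_{E⁺}(x) = ⋀x → ⋀(⋂E⁺ₓ \ x) is falsified by x and satisfied by every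
positive example, where E⁺ₓ = {e ∈ E⁺ | x ⊊ e}. A metaclause ⋀P → ⋀Q is
satisfied by y iff ¬ P ⊆ y ∨ Q ⊆ y. -/
theorem stmt8 {V : Type*} [Fintype V] (E : Set (Set V)) (hfin : E.Finite)
    (x : Set V) (hxE : x ∉ E)
    (hne : {e ∈ E | x ⊂ e}.Nonempty)
    (hcon : (⋂₀ {e ∈ E | x ⊂ e} \ x).Nonempty) :
    ¬ (¬ x ⊆ x ∨ ⋂₀ {e ∈ E | x ⊂ e} \ x ⊆ x) ∧
      ∀ e ∈ E, (¬ x ⊆ e ∨ ⋂₀ {e' ∈ E | x ⊂ e'} \ x ⊆ e) :=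
  stmt8_general E x hxE hcon
end

section
/- For every propositional formula φ over a finite variable set V, the intersection-closure cl(mod(φ)) of its set of models is itself the set of models of a Horn formula; consequently there exists a unique tightest Horn approximation: a Horn formula ψ with mod(ψ) = cl(mod(φ)), and any Horn formula χ with φ ⊨ χ satisfies ψ ⊨ χ. -/
/-- Propositional formulas over variables `V`. -/
inductive Form (V : Type*) where
  | var : V → Form V
  | tru : Form V
  | fls : Form V
  | neg : Form V → Form V
  | conj : Form V → Form V → Form V
  | disj : Form V → Form V → Form V
  | impl : Form V → Form V → Form V

/-- Satisfaction of a propositional formula by a model `x ⊆ V`. -/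
def Form.sat {V : Type*} (x : Set V) : Form V → Prop
  | .var v => v ∈ x
  | .tru => True
  | .fls => False
  | .neg φ => ¬ φ.sat x
  | .conj φ ψ => φ.sat x ∧ ψ.sat x
  | .disj φ ψ => φ.sat x ∨ ψ.sat x
  | .impl φ ψ => φ.sat x → ψ.sat x

section

variable {V : Type*}

theorem HornClause.sat_sInter (h : HornClause V) {N : Set (Set V)} (hN : N.Nonempty)
    (hsat : ∀ y ∈ N, HornClause.sat y h) : HornClause.sat (⋂₀ N) h := by
  by_cases hant : h.ant ⊆ ⋂₀ N
  · obtain ⟨y₀, hy₀⟩ := hN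
    have fires : ∀ y ∈ N, ∃ q, h.con = some q ∧ q ∈ y := fun y hy =>
      (hsat y hy).resolve_left fun hn => hn (hant.trans (Set.sInter_subset_of_mem hy))
    obtain ⟨q, hq, -⟩ := fires y₀ hy₀
    refine Or.inr ⟨q, hq, fun y hy => ?_⟩
    obtain ⟨q', hq', hq'y⟩ := fires y hy
    rwa [Option.some_injective _ (hq.symm.trans hq')]
  · exact Or.inl hant

theorem HornClause.sat_of_mem_interClosure (h : HornClause V) {M : Set (Set V)} {x : Set V}
    (hM : ∀ y ∈ M, HornClause.sat y h) (hx : x ∈ interClosure M) : HornClause.sat x h := by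
  obtain ⟨N, hNM, hN, rfl⟩ := hx
  exact h.sat_sInter hN fun y hy => hM y (hNM hy)

theorem mem_interClosure_of_sInter_subset {M : Set (Set V)} {x : Set V}
    (hne : ∃ y ∈ M, x ⊆ y) (hsub : ⋂₀ {y ∈ M | x ⊆ y} ⊆ x) : x ∈ interClosure M :=
  ⟨{y ∈ M | x ⊆ y}, Set.sep_subset _ _, hne,
    (Set.subset_sInter fun _ hy => hy.2).antisymm hsub⟩

theorem mem_interClosure_of_forall_hornClause {M : Set (Set V)} {x : Set V}
    (hx : ∀ h : HornClause V, (∀ y ∈ M, HornClause.sat y h) → HornClause.sat x h) :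
    x ∈ interClosure M := by
  refine mem_interClosure_of_sInter_subset ?_ fun q hq => ?_
  · by_contra! hno
    have hbot : HornClause.sat x ⟨x, none⟩ := hx _ fun y hy => Or.inl (hno y hy)
    simp [HornClause.sat] at hbot
  · by_contra hqx
    have hq : HornClause.sat x ⟨x, some q⟩ := hx _ fun y hy =>
      (em (x ⊆ y)).elim (fun hxy => Or.inr ⟨q, rfl, hq y ⟨hy, hxy⟩⟩) Or.inl
    simp [HornClause.sat, hqx] at hq

open Classical in
noncomputable def hornTheory [Fintype V] (M : Set (Set V)) : List (HornClause V) :=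
  ((Finset.univ : Finset (Set V × Option V)).toList.map fun c => ⟨c.1, c.2⟩).filter
    fun h => ∀ y ∈ M, HornClause.sat y h

theorem mem_hornTheory [Fintype V] {M : Set (Set V)} {h : HornClause V} :
    h ∈ hornTheory M ↔ ∀ y ∈ M, HornClause.sat y h := by
  simp [hornTheory]

theorem forall_hornTheory_sat_iff [Fintype V] {M : Set (Set V)} {x : Set V} :
    (∀ h ∈ hornTheory M, HornClause.sat x h) ↔ x ∈ interClosure M :=
  ⟨fun hx => mem_interClosure_of_forall_hornClause fun h hM => hx h (mem_hornTheory.2 hM),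
    fun hx h hT => h.sat_of_mem_interClosure (mem_hornTheory.1 hT) hx⟩

end

theorem stmt11 {V : Type*} [Fintype V] (φ : Form V) :
    ∃ T : List (HornClause V),
      {x : Set V | ∀ h ∈ T, HornClause.sat x h} = interClosure {x : Set V | Form.sat x φ} ∧
      ∀ χ : List (HornClause V),
        (∀ x : Set V, Form.sat x φ → ∀ h ∈ χ, HornClause.sat x h) →
        (∀ x : Set V, (∀ h ∈ T, HornClause.sat x h) → ∀ h ∈ χ, HornClause.sat x h) :=
  ⟨hornTheory {x | Form.sat x φ}, Set.ext fun _ => forall_hornTheory_sat_iff,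
    fun _ hχ _ hx h hh =>
      h.sat_of_mem_interClosure (fun y hy => hχ y hy h hh) (forall_hornTheory_sat_iff.1 hx)⟩
end
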